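/- arXiv:2604.11693 — 12 statements merged into one kernel-verified Lean document; each statement's English description precedes it below -/
import Mathlib

section
/- If F : K^n → K^n is a Pascal finite polynomial map (i.e., Δ_F^m(Id) = 0 for some m ≥ 1) and F is a polynomial automorphism, then its inverse is given by G(X) = Σ_{l=0}^{m−1} (−1)^l Δ_F^l(Id)(X). -/
open MvPolynomial Finset

/-- Composition `P ∘ F` of polynomial maps of `K^n`. -/
noncomputable def PolyMap.comp {K : Type*} [CommRing K] {n : ℕ}
    (P F : Fin n → MvPolynomial (Fin n) K) : Fin n → MvPolynomial (Fin n) K :=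
  fun i => bind₁ F (P i)

/-- The identity polynomial map. -/
noncomputable def PolyMap.id (K : Type*) [CommRing K] (n : ℕ) :
    Fin n → MvPolynomial (Fin n) K :=
  fun i => X i

/-- The Pascal difference operator `Δ_F P = P ∘ F − P`. -/
noncomputable def Δ {K : Type*} [CommRing K] {n : ℕ}
    (F P : Fin n → MvPolynomial (Fin n) K) : Fin n → MvPolynomial (Fin n) K :=
  fun i => bind₁ F (P i) - P i

/-- `F` is Pascal finite if some iterate of `Δ_F` kills the identity map. -/
def IsPascalFinite {K : Type*} [CommRing K] {n : ℕ}
    (F : Fin n → MvPolynomial (Fin n) K) : Prop :=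
  ∃ m : ℕ, 0 < m ∧ (Δ F)^[m] (PolyMap.id K n) = 0

/-- Compositional powers of a polynomial map. -/
noncomputable def PolyMap.pow {K : Type*} [CommRing K] {n : ℕ}
    (F : Fin n → MvPolynomial (Fin n) K) : ℕ → (Fin n → MvPolynomial (Fin n) K)
  | 0 => PolyMap.id K n
  | (l + 1) => PolyMap.comp (PolyMap.pow F l) F

/-- if `F` is a Pascal finite polynomial automorphism with
`Δ_F^m(Id) = 0`, then its inverse is `G = ∑_{l=0}^{m−1} (−1)^l Δ_F^l(Id)`. -/
theorem inverse_of_pascal_finite {K : Type*} [Field K] {n : ℕ}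
    (F Finv : Fin n → MvPolynomial (Fin n) K)
    (hinv₁ : PolyMap.comp F Finv = PolyMap.id K n)
    (hinv₂ : PolyMap.comp Finv F = PolyMap.id K n)
    (m : ℕ) (hm : 0 < m) (hPF : (Δ F)^[m] (PolyMap.id K n) = 0)
    (G : Fin n → MvPolynomial (Fin n) K)
    (hG : G = fun i => ∑ l ∈ Finset.range m,
      (-1 : MvPolynomial (Fin n) K) ^ l * ((Δ F)^[l] (PolyMap.id K n) i)) :
    PolyMap.comp G F = PolyMap.id K n ∧ Finv = G := by
  have hcomp : PolyMap.comp G F = PolyMap.id K n := by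
    funext i
    set P : ℕ → Fin n → MvPolynomial (Fin n) K := fun l => (Δ F)^[l] (PolyMap.id K n) with hP
    have hstep : ∀ l, bind₁ F (P l i) = P (l + 1) i + P l i := by
      intro l
      have : P (l + 1) = Δ F (P l) := by
        simp [hP, Function.iterate_succ_apply']
      rw [this]
      simp [Δ]
    simp only [PolyMap.comp, hG, map_sum, map_mul, map_pow, map_neg, map_one]
    have : ∀ l ∈ Finset.range m,
        (-1 : MvPolynomial (Fin n) K) ^ l * bind₁ F (P l i)
        = (fun l => (-1 : MvPolynomial (Fin n) K) ^ l * P l i) l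
          - (fun l => (-1 : MvPolynomial (Fin n) K) ^ l * P l i) (l + 1) := by
      intro l _
      rw [hstep l]
      simp only [pow_succ]
      ring
    rw [Finset.sum_congr rfl this, Finset.sum_range_sub']
    have hPm : P m i = 0 := by
      show (Δ F)^[m] (PolyMap.id K n) i = 0
      rw [hPF]; rfl
    simp only [hPm, mul_zero, sub_zero, pow_zero, one_mul]
    rfl
  refine ⟨hcomp, ?_⟩
  funext i
  have h1 : bind₁ Finv (bind₁ F (G i)) = G i := by
    rw [bind₁_bind₁]
    have : (fun j => bind₁ Finv (F j)) = PolyMap.id K n := by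
      funext j; exact congrFun hinv₁ j
    rw [this]
    show bind₁ (X : Fin n → MvPolynomial (Fin n) K) (G i) = G i
    rw [bind₁_X_left]; rfl
  have h2 : bind₁ F (G i) = X i := congrFun hcomp i
  rw [h2] at h1
  rw [bind₁_X_right] at h1
  exact h1
end

section
/- The linear map F : K^2 → K^2 given by F(X_1, X_2) = (2X_1 + X_2, X_1 + X_2) is not Pascal finite: the sequence P_k^1 = (Δ_F^k(Id))_1 satisfies P_1^1 = X_1 + X_2, P_2^1 = 2X_1 + X_2, and P_{k}^1 = P_{k−1}^1 + P_{k−2}^1 for all k > 2; in particular P_k^1 ≠ 0 for all k ≥ 1. -/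
open MvPolynomial Finset

lemma key {K : Type*} [Field K] [CharZero K]
    (F : Fin 2 → MvPolynomial (Fin 2) K)
    (hF : F = ![C 2 * X 0 + X 1, X 0 + X 1]) (k : ℕ) :
    (Δ F)^[k+1] (PolyMap.id K 2) 0
      = C (Nat.fib (k+2) : K) * X 0 + C (Nat.fib (k+1) : K) * X 1 ∧
    (Δ F)^[k+1] (PolyMap.id K 2) 1
      = C (Nat.fib (k+1) : K) * X 0 + C (Nat.fib k : K) * X 1 := by
  induction k with
  | zero =>
    rw [Function.iterate_one]
    constructor <;>
    · show bind₁ F _ - _ = _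
      simp only [PolyMap.id, bind₁_X_right, hF,
        Matrix.cons_val_zero, Matrix.cons_val_one, Matrix.head_cons,
        Nat.fib_one, Nat.fib_two, Nat.fib_zero, Nat.cast_one, Nat.cast_zero]
      norm_num [map_ofNat]
      try ring
  | succ k ih =>
    obtain ⟨h0, h1⟩ := ih
    constructor <;>
    · rw [Function.iterate_succ_apply']
      show bind₁ F _ - _ = _
      first
        | rw [h0]
        | rw [h1]
      simp only [map_add, map_mul, algHom_C, bind₁_X_right, hF, algebraMap_eq,
        Matrix.cons_val_zero, Matrix.cons_val_one, Matrix.head_cons,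
        Nat.fib_add_two]
      push_cast
      simp only [C_add, C_mul, map_ofNat, map_one, map_zero]
      ring

/-- the linear map `F(X₁,X₂) = (2X₁+X₂, X₁+X₂)` over a field of
characteristic zero is not Pascal finite; the first components of the Pascal
sequence satisfy the Fibonacci-type recurrence and never vanish. -/
theorem fibonacci_map_not_pascal_finite {K : Type*} [Field K] [CharZero K]
    (F : Fin 2 → MvPolynomial (Fin 2) K)
    (hF : F = ![C 2 * X 0 + X 1, X 0 + X 1]) :
    ((Δ F)^[1] (PolyMap.id K 2) 0 = X 0 + X 1) ∧
    ((Δ F)^[2] (PolyMap.id K 2) 0 = C 2 * X 0 + X 1) ∧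
    (∀ k : ℕ, 2 < k →
      (Δ F)^[k] (PolyMap.id K 2) 0 =
        (Δ F)^[k - 1] (PolyMap.id K 2) 0 + (Δ F)^[k - 2] (PolyMap.id K 2) 0) ∧
    (∀ k : ℕ, 1 ≤ k → (Δ F)^[k] (PolyMap.id K 2) 0 ≠ 0) ∧
    ¬ IsPascalFinite F := by
  have hnz : ∀ k : ℕ, 1 ≤ k → (Δ F)^[k] (PolyMap.id K 2) 0 ≠ 0 := by
    intro k hk h
    obtain ⟨j, rfl⟩ : ∃ j, k = j + 1 := ⟨k - 1, by omega⟩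
    rw [(key F hF j).1] at h
    have h2 := congrArg (eval (![1, 0] : Fin 2 → K)) h
    simp only [eval_add, eval_mul, eval_C, eval_X, map_zero,
      Matrix.cons_val_zero, Matrix.cons_val_one, Matrix.head_cons,
      mul_one, mul_zero, add_zero] at h2
    have : Nat.fib (j + 2) ≠ 0 := (Nat.fib_pos.mpr (by omega)).ne'
    exact this (Nat.cast_eq_zero.mp h2)
  refine ⟨?_, ?_, ?_, hnz, ?_⟩
  · rw [(key F hF 0).1]; norm_num
  · rw [(key F hF 1).1]
    norm_num [Nat.fib_add_two, map_ofNat]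
  · intro k hk
    obtain ⟨j, rfl⟩ : ∃ j, k = j + 3 := ⟨k - 3, by omega⟩
    rw [show j + 3 = (j + 2) + 1 from rfl, (key F hF (j + 2)).1,
      show j + 3 - 1 = (j + 1) + 1 from rfl, (key F hF (j + 1)).1,
      show j + 3 - 2 = j + 1 from rfl, (key F hF j).1]
    simp only [Nat.fib_add_two]
    push_cast
    simp only [C_add]
    ring
  · rintro ⟨m, hm, h⟩
    exact hnz m hm (by rw [congrFun h 0]; rfl)
end

section
/- Let F(X) = X + AX with A ∈ M_2(ℚ) the matrix [[1,1],[1,0]]. The associated matrix I + A = [[2,1],[1,1]] has determinant 1, F is a (linear) automorphism, and F is tame but not Pascal finite. -/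
open MvPolynomial Finset

/-- An elementary polynomial map: it adds to one coordinate a polynomial not
depending on that coordinate, and fixes all the others. -/
def IsElementary {K : Type*} [Field K] {n : ℕ}
    (F : Fin n → MvPolynomial (Fin n) K) : Prop :=
  ∃ (i : Fin n) (a : MvPolynomial (Fin n) K), degreeOf i a = 0 ∧
    F i = X i + a ∧ ∀ j, j ≠ i → F j = X j

/-- An invertible affine polynomial map. -/
def IsAffineAut {K : Type*} [Field K] {n : ℕ}
    (F : Fin n → MvPolynomial (Fin n) K) : Prop :=
  (∀ i, totalDegree (F i) ≤ 1) ∧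
  ∃ G, PolyMap.comp F G = PolyMap.id K n ∧ PolyMap.comp G F = PolyMap.id K n

/-- Tame maps: generated under composition by elementary and invertible affine maps. -/
inductive IsTame {K : Type*} [Field K] {n : ℕ} :
    (Fin n → MvPolynomial (Fin n) K) → Prop
  | elem {F} : IsElementary F → IsTame F
  | affine {F} : IsAffineAut F → IsTame F
  | comp {F G} : IsTame F → IsTame G → IsTame (PolyMap.comp F G)

noncomputable def linMap (B : Matrix (Fin 2) (Fin 2) ℚ) : Fin 2 → MvPolynomial (Fin 2) ℚ :=
  fun i => ∑ j, C (B i j) * X j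

lemma linMap_one : linMap 1 = PolyMap.id ℚ 2 := by
  funext i
  fin_cases i <;>
    simp [linMap, PolyMap.id, Fin.sum_univ_two, Matrix.one_apply]

lemma Δ_linMap (A : Matrix (Fin 2) (Fin 2) ℚ)
    (F : Fin 2 → MvPolynomial (Fin 2) ℚ)
    (hF : F = fun i => X i + ∑ j, C (A i j) * X j)
    (B : Matrix (Fin 2) (Fin 2) ℚ) :
    Δ F (linMap B) = linMap (B * A) := by
  funext i
  simp only [Δ, linMap, map_sum, map_mul, bind₁_C_right, bind₁_X_right, hF,
    Fin.sum_univ_two, Matrix.mul_apply, map_add, map_mul]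
  ring

lemma iter_linMap (A : Matrix (Fin 2) (Fin 2) ℚ)
    (F : Fin 2 → MvPolynomial (Fin 2) ℚ)
    (hF : F = fun i => X i + ∑ j, C (A i j) * X j) (m : ℕ) :
    (Δ F)^[m] (PolyMap.id ℚ 2) = linMap (A ^ m) := by
  induction m with
  | zero => simp [linMap_one]
  | succ k ih =>
      rw [Function.iterate_succ_apply', ih, Δ_linMap A F hF, pow_succ]

lemma linMap_eq_zero (B : Matrix (Fin 2) (Fin 2) ℚ) (h : linMap B = 0) : B = 0 := by
  ext i j
  have h2 := congrArg (eval (fun k => if k = j then (1:ℚ) else 0)) (congrFun h i)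
  fin_cases j <;> simpa [linMap, Fin.sum_univ_two] using h2

/-- for `A = [[1,1],[1,0]]` over `ℚ`, the map `F(X) = X + AX` has
`det(I + A) = 1`, is a (linear) automorphism, is tame, but is not Pascal finite. -/
theorem fibonacci_map_tame_not_pascal_finite
    (A : Matrix (Fin 2) (Fin 2) ℚ) (hA : A = !![1, 1; 1, 0])
    (F : Fin 2 → MvPolynomial (Fin 2) ℚ)
    (hF : F = fun i => X i + ∑ j, C (A i j) * X j) :
    (1 + A).det = 1 ∧
    (∃ G, PolyMap.comp F G = PolyMap.id ℚ 2 ∧ PolyMap.comp G F = PolyMap.id ℚ 2) ∧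
    IsTame F ∧
    ¬ IsPascalFinite F := by
  subst hA
  have hinv : PolyMap.comp F (linMap !![1, -1; -1, 2]) = PolyMap.id ℚ 2 ∧
      PolyMap.comp (linMap !![1, -1; -1, 2]) F = PolyMap.id ℚ 2 := by
    constructor <;> funext i <;> fin_cases i <;>
      · simp [PolyMap.comp, PolyMap.id, hF, linMap, Fin.sum_univ_two, map_add, map_mul,
          bind₁_X_right, bind₁_C_right, map_neg, map_one, map_ofNat]
        ring
  have hdeg : ∀ i, totalDegree (F i) ≤ 1 := by
    intro i
    fin_cases i <;>
      · simp only [hF, Fin.sum_univ_two]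
        refine (totalDegree_add _ _).trans (max_le (by simp [totalDegree_X]) ?_)
        refine (totalDegree_add _ _).trans (max_le ?_ ?_) <;>
          exact (totalDegree_mul _ _).trans (by simp [totalDegree_X, totalDegree_C])
  refine ⟨by norm_num [Matrix.det_fin_two, Matrix.one_apply], ⟨_, hinv⟩,
    IsTame.affine ⟨hdeg, _, hinv⟩, ?_⟩
  rintro ⟨m, hm, h0⟩
  rw [iter_linMap _ F hF] at h0
  have hB := congrArg Matrix.det (linMap_eq_zero _ h0)
  rw [Matrix.det_pow] at hB
  norm_num [Matrix.det_fin_two] at hB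
end

section
/- Every triangular polynomial automorphism of K^n is Pascal finite: if F_i − X_i ∈ K[X_{i+1}, …, X_n] for each i (with F_n − X_n ∈ K), then Δ_F^m(Id) = 0 for some m. -/
open MvPolynomial Finset

namespace TriPF

variable {K : Type*} [CommRing K] {n : ℕ}

/-- Weighted total degree (with value 0 on the zero polynomial). -/
noncomputable def ω (w : Fin n → ℕ) (P : MvPolynomial (Fin n) K) : ℕ :=
  P.support.sup fun α => Finsupp.weight w α

lemma ω_le {w : Fin n → ℕ} {P : MvPolynomial (Fin n) K} {c : ℕ}
    (h : ∀ α ∈ P.support, Finsupp.weight w α ≤ c) : ω w P ≤ c :=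
  Finset.sup_le h

lemma weight_le_ω {w : Fin n → ℕ} {P : MvPolynomial (Fin n) K} {α : Fin n →₀ ℕ}
    (h : α ∈ P.support) : Finsupp.weight w α ≤ ω w P :=
  Finset.le_sup h

lemma ω_zero (w : Fin n → ℕ) : ω w (0 : MvPolynomial (Fin n) K) = 0 := by
  simp [ω]

lemma ω_add_le {w : Fin n → ℕ} {P Q : MvPolynomial (Fin n) K} {c : ℕ}
    (hP : ω w P ≤ c) (hQ : ω w Q ≤ c) : ω w (P + Q) ≤ c := by
  classical
  refine ω_le fun α hα => ?_
  rcases Finset.mem_union.1 (MvPolynomial.support_add hα) with h | h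
  · exact le_trans (weight_le_ω h) hP
  · exact le_trans (weight_le_ω h) hQ

lemma ω_mul_le {w : Fin n → ℕ} {P Q : MvPolynomial (Fin n) K} {a b : ℕ}
    (hP : ω w P ≤ a) (hQ : ω w Q ≤ b) : ω w (P * Q) ≤ a + b := by
  classical
  refine ω_le fun α hα => ?_
  obtain ⟨β, hβ, γ, hγ, rfl⟩ := Finset.mem_add.1 (MvPolynomial.support_mul P Q hα)
  rw [map_add]
  exact add_le_add (le_trans (weight_le_ω hβ) hP) (le_trans (weight_le_ω hγ) hQ)

lemma ω_pow_le {w : Fin n → ℕ} {P : MvPolynomial (Fin n) K} {a : ℕ}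
    (hP : ω w P ≤ a) (b : ℕ) : ω w (P ^ b) ≤ b * a := by
  induction b with
  | zero =>
      rw [pow_zero, Nat.zero_mul]
      refine ω_le fun α hα => ?_
      rw [MvPolynomial.mem_support_iff, MvPolynomial.coeff_one] at hα
      by_cases h : α = 0
      · subst h; simp
      · rw [if_neg (fun e => h e.symm)] at hα; exact absurd rfl hα
  | succ b ih =>
      rw [pow_succ, Nat.succ_mul]
      exact ω_mul_le ih hP

lemma ω_monomial_le {w : Fin n → ℕ} {α : Fin n →₀ ℕ} {c : K} :
    ω w (monomial α c) ≤ Finsupp.weight w α := by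
  refine ω_le fun β hβ => ?_
  have := MvPolynomial.support_monomial_subset hβ
  simp only [Finset.mem_singleton] at this
  subst this; rfl

lemma ω_sum_le {w : Fin n → ℕ} {ι : Type*} {s : Finset ι}
    {f : ι → MvPolynomial (Fin n) K} {c : ℕ} (h : ∀ i ∈ s, ω w (f i) ≤ c) :
    ω w (∑ i ∈ s, f i) ≤ c := by
  classical
  refine Finset.sum_induction f (fun q => ω w q ≤ c) (fun a b ha hb => ω_add_le ha hb)
    (le_trans (le_of_eq (ω_zero w)) (Nat.zero_le c)) h

lemma weight_single {w : Fin n → ℕ} (a : Fin n) (b : ℕ) :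
    Finsupp.weight w (Finsupp.single a b) = b * w a := by
  rw [Finsupp.weight_apply, Finsupp.sum_single_index] <;> simp [smul_eq_mul]

lemma ω_C_le {w : Fin n → ℕ} {c : K} : ω w (C c) ≤ 0 := by
  rw [MvPolynomial.C_apply]
  exact le_trans ω_monomial_le (by simp)

lemma ω_X_le {w : Fin n → ℕ} (i : Fin n) : ω w (X i : MvPolynomial (Fin n) K) ≤ w i := by
  have hX : (X i : MvPolynomial (Fin n) K) = monomial (Finsupp.single i 1) 1 := rfl
  rw [hX]
  exact le_trans ω_monomial_le (by rw [weight_single]; omega)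

lemma ω_natCast_le {w : Fin n → ℕ} (m : ℕ) : ω w ((m : MvPolynomial (Fin n) K)) ≤ 0 := by
  rw [← map_natCast (C : K →+* MvPolynomial (Fin n) K)]
  exact ω_C_le

variable {F : Fin n → MvPolynomial (Fin n) K} {w : Fin n → ℕ}

lemma ωF_le (hF : ∀ j, ω w (F j - X j) + 1 ≤ w j) (a : Fin n) : ω w (F a) ≤ w a := by
  have h : F a = (F a - X a) + X a := by ring
  rw [h]
  exact ω_add_le (by have := hF a; omega) (ω_X_le a)

lemma pow_diff_le (hF : ∀ j, ω w (F j - X j) + 1 ≤ w j)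
    (a : Fin n) {b : ℕ} (hw : 1 ≤ w a) (hb : 1 ≤ b) :
    ω w (F a ^ b - X a ^ b) + 1 ≤ b * w a := by
  have hH : ω w (F a - X a) + 1 ≤ w a := hF a
  have key : F a ^ b - X a ^ b
      = ∑ k ∈ Finset.range b, X a ^ k * (F a - X a) ^ (b - k) * ((b.choose k : ℕ) : MvPolynomial (Fin n) K) := by
    have hFa : F a = X a + (F a - X a) := by ring
    calc F a ^ b - X a ^ b = (X a + (F a - X a)) ^ b - X a ^ b := by rw [← hFa]
      _ = _ := by
          rw [add_pow, Finset.sum_range_succ]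
          simp [Nat.sub_self]
  have hterm : ∀ k ∈ Finset.range b,
      ω w (X a ^ k * (F a - X a) ^ (b - k) * ((b.choose k : ℕ) : MvPolynomial (Fin n) K)) + 1
        ≤ b * w a := by
    intro k hk
    rw [Finset.mem_range] at hk
    have h1 : ω w (X a ^ k * (F a - X a) ^ (b - k) * ((b.choose k : ℕ) : MvPolynomial (Fin n) K))
        ≤ (k * w a + (b - k) * ω w (F a - X a)) + 0 :=
      ω_mul_le (ω_mul_le (ω_pow_le (ω_X_le a) k) (ω_pow_le le_rfl (b - k))) (ω_natCast_le _)
    have hc1 : 1 ≤ b - k := by omega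
    have hkc : k + (b - k) = b := by omega
    have h2 : (b - k) * ω w (F a - X a) + 1 ≤ (b - k) * w a := by
      calc (b - k) * ω w (F a - X a) + 1 ≤ (b - k) * ω w (F a - X a) + (b - k) := by omega
        _ = (b - k) * (ω w (F a - X a) + 1) := by ring
        _ ≤ (b - k) * w a := Nat.mul_le_mul_left _ hH
    have h3 : k * w a + (b - k) * w a = b * w a := by rw [← add_mul, hkc]
    omega
  have hpos : 1 ≤ b * w a := Nat.mul_le_mul hb hw
  have : ω w (F a ^ b - X a ^ b) ≤ b * w a - 1 := by
    rw [key]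
    exact ω_sum_le fun k hk => by have := hterm k hk; omega
  omega

lemma prod_diff_le (hw : ∀ j, 1 ≤ w j) (hF : ∀ j, ω w (F j - X j) + 1 ≤ w j)
    (α : Fin n →₀ ℕ) (s : Finset (Fin n)) :
    (∏ j ∈ s, F j ^ α j) - ∏ j ∈ s, X j ^ α j = 0 ∨
      ω w ((∏ j ∈ s, F j ^ α j) - ∏ j ∈ s, X j ^ α j) + 1 ≤ ∑ j ∈ s, α j * w j := by
  classical
  induction s using Finset.induction with
  | empty => left; simp
  | @insert a s ha ih =>
    rw [Finset.prod_insert ha, Finset.prod_insert ha, Finset.sum_insert ha]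
    by_cases hb : α a = 0
    · rcases ih with h | h
      · left; simpa [hb] using h
      · right
        rw [show F a ^ α a = 1 by simp [hb], show (X a : MvPolynomial (Fin n) K) ^ α a = 1 by simp [hb],
          one_mul, one_mul, hb, zero_mul, zero_add]
        exact h
    · have hb1 : 1 ≤ α a := Nat.one_le_iff_ne_zero.2 hb
      right
      have key : F a ^ α a * ∏ j ∈ s, F j ^ α j - X a ^ α a * ∏ j ∈ s, X j ^ α j
          = F a ^ α a * ((∏ j ∈ s, F j ^ α j) - ∏ j ∈ s, X j ^ α j)
            + (F a ^ α a - X a ^ α a) * ∏ j ∈ s, X j ^ α j := by ring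
      rw [key]
      have hQ : ω w (∏ j ∈ s, (X j : MvPolynomial (Fin n) K) ^ α j) ≤ ∑ j ∈ s, α j * w j := by
        clear key ih ha
        induction s using Finset.induction with
        | empty =>
          rw [Finset.prod_empty, Finset.sum_empty, ← C_1]
          exact ω_C_le
        | @insert a' s' ha' ih' =>
          rw [Finset.prod_insert ha', Finset.sum_insert ha']
          exact ω_mul_le (ω_pow_le (ω_X_le a') (α a')) ih'
      have hpos : 1 ≤ α a * w a := Nat.mul_le_mul hb1 (hw a)
      have h2 : ω w ((F a ^ α a - X a ^ α a) * ∏ j ∈ s, X j ^ α j) + 1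
          ≤ α a * w a + ∑ j ∈ s, α j * w j := by
        have := pow_diff_le hF a (hw a) hb1
        have := ω_mul_le (le_refl (ω w (F a ^ α a - X a ^ α a))) hQ
        omega
      have h1 : ω w (F a ^ α a * ((∏ j ∈ s, F j ^ α j) - ∏ j ∈ s, X j ^ α j)) + 1
          ≤ α a * w a + ∑ j ∈ s, α j * w j := by
        rcases ih with h | h
        · rw [h, mul_zero]
          rw [ω_zero]
          omega
        · have := ω_mul_le (ω_pow_le (ωF_le hF a) (α a))
            (le_refl (ω w ((∏ j ∈ s, F j ^ α j) - ∏ j ∈ s, X j ^ α j)))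
          omega
      have := ω_add_le (c := α a * w a + ∑ j ∈ s, α j * w j - 1)
        (by omega : ω w (F a ^ α a * ((∏ j ∈ s, F j ^ α j) - ∏ j ∈ s, X j ^ α j)) ≤ _)
        (by omega : ω w ((F a ^ α a - X a ^ α a) * ∏ j ∈ s, X j ^ α j) ≤ _)
      omega

noncomputable def δ' (F : Fin n → MvPolynomial (Fin n) K) (P : MvPolynomial (Fin n) K) :
    MvPolynomial (Fin n) K := bind₁ F P - P

lemma delta_mono (hw : ∀ j, 1 ≤ w j) (hF : ∀ j, ω w (F j - X j) + 1 ≤ w j)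
    (α : Fin n →₀ ℕ) (c : K) :
    δ' F (monomial α c) = 0 ∨ ω w (δ' F (monomial α c)) + 1 ≤ Finsupp.weight w α := by
  classical
  have hbind : bind₁ F (monomial α c) = C c * ∏ i ∈ α.support, F i ^ α i :=
    bind₁_monomial F α c
  have hmono : (monomial α c : MvPolynomial (Fin n) K) = C c * ∏ i ∈ α.support, X i ^ α i := by
    rw [monomial_eq]; rfl
  have hkey : δ' F (monomial α c)
      = C c * ((∏ i ∈ α.support, F i ^ α i) - ∏ i ∈ α.support, X i ^ α i) := by
    rw [δ', hbind, hmono]; ring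
  have hsum : ∑ i ∈ α.support, α i * w i = Finsupp.weight w α := by
    rw [Finsupp.weight_apply, Finsupp.sum]
    simp [smul_eq_mul]
  rcases prod_diff_le hw hF α α.support with h | h
  · left; rw [hkey, h, mul_zero]
  · right
    rw [hkey]
    have hmul := ω_mul_le (ω_C_le (w := w) (c := c))
      (le_refl (ω w ((∏ i ∈ α.support, F i ^ α i) - ∏ i ∈ α.support, X i ^ α i)))
    omega

lemma delta_le (hw : ∀ j, 1 ≤ w j) (hF : ∀ j, ω w (F j - X j) + 1 ≤ w j)
    (P : MvPolynomial (Fin n) K) :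
    δ' F P = 0 ∨ ω w (δ' F P) + 1 ≤ ω w P := by
  classical
  have hsplit : (∑ α ∈ P.support, δ' F (monomial α (coeff α P))) = δ' F P := by
    simp only [δ']
    rw [Finset.sum_sub_distrib, ← map_sum, ← MvPolynomial.as_sum]
  by_cases h0 : ω w P = 0
  · left
    rw [← hsplit]
    refine Finset.sum_eq_zero fun α hα => ?_
    rcases delta_mono hw hF α (coeff α P) with h | h
    · exact h
    · exfalso; have := weight_le_ω (w := w) hα; omega
  · right
    have hb : ω w (δ' F P) ≤ ω w P - 1 := by
      rw [← hsplit]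
      refine ω_sum_le fun α hα => ?_
      rcases delta_mono hw hF α (coeff α P) with h | h
      · rw [h, ω_zero]; omega
      · have := weight_le_ω (w := w) hα; omega
    omega

lemma delta_iter_zero (hw : ∀ j, 1 ≤ w j) (hF : ∀ j, ω w (F j - X j) + 1 ≤ w j) :
    ∀ m : ℕ, ∀ P : MvPolynomial (Fin n) K, ω w P < m → (δ' F)^[m] P = 0 := by
  intro m
  induction m with
  | zero => intro P h; exact absurd h (Nat.not_lt_zero _)
  | succ m ih =>
    intro P hP
    rw [Function.iterate_succ_apply]
    rcases delta_le hw hF P with h | h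
    · rw [h]
      exact Function.iterate_fixed (by simp [δ']) m
    · exact ih _ (by omega)

end TriPF

/-- every triangular polynomial map, i.e. one with
`F i − X i ∈ K[X_{i+1}, …, X_n]`, is Pascal finite. -/
theorem triangular_is_pascal_finite {K : Type*} [Field K] {n : ℕ}
    (F : Fin n → MvPolynomial (Fin n) K)
    (htri : ∀ i j : Fin n, j ≤ i → degreeOf j (F i - X i) = 0) :
    IsPascalFinite F := by
  classical
  set D : ℕ := Finset.univ.sup (fun i => (F i - X i).totalDegree) with hD
  set M : ℕ := D + 1 with hMdef
  set w : Fin n → ℕ := fun j => M ^ (n - 1 - (j : ℕ)) with hwdef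
  have hM : 1 ≤ M := by omega
  have hw : ∀ j, 1 ≤ w j := fun j => Nat.one_le_pow _ _ (by omega)
  have hF : ∀ j, TriPF.ω w (F j - X j) + 1 ≤ w j := by
    intro j
    have hwj := hw j
    have hle : TriPF.ω w (F j - X j) ≤ w j - 1 := by
      refine TriPF.ω_le fun α hα => ?_
      have hzero : ∀ k : Fin n, k ≤ j → α k = 0 := by
        intro k hk
        have h1 : α k ≤ degreeOf k (F j - X j) := by
          rw [degreeOf_eq_sup]; exact Finset.le_sup (f := fun m : Fin n →₀ ℕ => m k) hα
        rw [htri j k hk] at h1; omega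
      by_cases hα0 : α = 0
      · subst hα0; simp
      · obtain ⟨k0, hk0⟩ := Finsupp.ne_iff.1 hα0
        simp only [Finsupp.coe_zero, Pi.zero_apply] at hk0
        have hjk0 : j < k0 := lt_of_not_ge fun hle' => hk0 (hzero k0 hle')
        have hk0n : (k0 : ℕ) < n := k0.isLt
        have hjn : (j : ℕ) + 2 ≤ n := by
          have h : (j : ℕ) < (k0 : ℕ) := hjk0
          omega
        set c : ℕ := M ^ (n - 2 - (j : ℕ)) with hcdef
        have hc1 : 1 ≤ c := Nat.one_le_pow _ _ (by omega)
        have hstep : Finsupp.weight w α ≤ (∑ k ∈ α.support, α k) * c := by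
          rw [Finsupp.weight_apply, Finsupp.sum]
          calc ∑ k ∈ α.support, α k • w k ≤ ∑ k ∈ α.support, α k * c := by
                refine Finset.sum_le_sum fun k hk => ?_
                rw [smul_eq_mul]
                refine Nat.mul_le_mul_left _ ?_
                have hak : α k ≠ 0 := Finsupp.mem_support_iff.1 hk
                have hjk : j < k := lt_of_not_ge fun hle' => hak (hzero k hle')
                have hjkv : (j : ℕ) < (k : ℕ) := hjk
                have hkn : (k : ℕ) < n := k.isLt
                show M ^ (n - 1 - (k : ℕ)) ≤ c
                rw [hcdef]
                exact Nat.pow_le_pow_right hM (by omega)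
            _ = (∑ k ∈ α.support, α k) * c := by rw [Finset.sum_mul]
        have hdeg : (∑ k ∈ α.support, α k) ≤ D := by
          have h1 : (α.sum fun _ e => e) ≤ (F j - X j).totalDegree := by
            rw [MvPolynomial.totalDegree]
            exact Finset.le_sup (f := fun s : Fin n →₀ ℕ => s.sum fun _ e => e) hα
          have h2 : (F j - X j).totalDegree ≤ D := by
            rw [hD]; exact Finset.le_sup (f := fun i => (F i - X i).totalDegree) (Finset.mem_univ j)
          have h3 : (α.sum fun _ e => e) = ∑ k ∈ α.support, α k := rfl
          omega
        have hMc : w j = D * c + c := by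
          show M ^ (n - 1 - (j : ℕ)) = D * c + c
          rw [show n - 1 - (j : ℕ) = (n - 2 - (j : ℕ)) + 1 from by omega, pow_succ,
            ← hcdef, hMdef]
          ring
        have hfin : Finsupp.weight w α ≤ D * c := le_trans hstep (Nat.mul_le_mul_right c hdeg)
        omega
    omega
  set m : ℕ := (Finset.univ.sup w) + 1 with hm
  have hiter : ∀ l (Q : Fin n → MvPolynomial (Fin n) K),
      (Δ F)^[l] Q = fun i => (TriPF.δ' F)^[l] (Q i) := by
    intro l
    induction l with
    | zero => intro Q; rfl
    | succ l ih =>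
      intro Q
      rw [Function.iterate_succ_apply, ih]
      funext i
      rw [Function.iterate_succ_apply]
      rfl
  refine ⟨m, Nat.succ_pos _, ?_⟩
  rw [hiter]
  funext i
  show (TriPF.δ' F)^[m] (X i) = 0
  refine TriPF.delta_iter_zero hw hF m _ ?_
  have h1 : TriPF.ω w (X i : MvPolynomial (Fin n) K) ≤ w i := TriPF.ω_X_le i
  have h2 : w i ≤ Finset.univ.sup w := Finset.le_sup (Finset.mem_univ i)
  omega
end

section
/- Pascal finiteness is invariant under conjugation: if F : K^n → K^n is Pascal finite and T : K^n → K^n is an invertible polynomial map, then T⁻¹ ∘ F ∘ T is Pascal finite. -/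
open MvPolynomial Finset

namespace PascalAux

variable {K : Type*} [CommRing K] {n : ℕ}

/-- The scalar Pascal difference operator on single polynomials. -/
noncomputable def δ₁ (F : Fin n → MvPolynomial (Fin n) K)
    (p : MvPolynomial (Fin n) K) : MvPolynomial (Fin n) K :=
  bind₁ F p - p

lemma δ₁_zero (F : Fin n → MvPolynomial (Fin n) K) : δ₁ F 0 = 0 := by
  simp [δ₁]

lemma δ₁_add (F : Fin n → MvPolynomial (Fin n) K) (p q : MvPolynomial (Fin n) K) :
    δ₁ F (p + q) = δ₁ F p + δ₁ F q := by
  simp [δ₁]; ring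

lemma δ₁_iter_zero (F : Fin n → MvPolynomial (Fin n) K) (k : ℕ) :
    (δ₁ F)^[k] 0 = 0 := by
  induction k with
  | zero => rfl
  | succ k ih => rw [Function.iterate_succ_apply, δ₁_zero, ih]

lemma δ₁_iter_add (F : Fin n → MvPolynomial (Fin n) K) (k : ℕ)
    (p q : MvPolynomial (Fin n) K) :
    (δ₁ F)^[k] (p + q) = (δ₁ F)^[k] p + (δ₁ F)^[k] q := by
  induction k generalizing p q with
  | zero => rfl
  | succ k ih => rw [Function.iterate_succ_apply, Function.iterate_succ_apply,
      Function.iterate_succ_apply, δ₁_add, ih]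

lemma δ₁_iter_mono {F : Fin n → MvPolynomial (Fin n) K} {a : ℕ}
    {p : MvPolynomial (Fin n) K} (h : (δ₁ F)^[a] p = 0) {b : ℕ} (hab : a ≤ b) :
    (δ₁ F)^[b] p = 0 := by
  obtain ⟨k, rfl⟩ := Nat.exists_eq_add_of_le hab
  rw [Nat.add_comm, Function.iterate_add_apply, h, δ₁_iter_zero]

/-- δ-nilpotence. -/
def Nil (F : Fin n → MvPolynomial (Fin n) K) (p : MvPolynomial (Fin n) K) : Prop :=
  ∃ N, (δ₁ F)^[N] p = 0

lemma nil_zero (F : Fin n → MvPolynomial (Fin n) K) : Nil F 0 := ⟨0, rfl⟩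

lemma nil_C (F : Fin n → MvPolynomial (Fin n) K) (a : K) : Nil F (C a) := by
  exact ⟨1, by simp [δ₁]⟩

lemma nil_add {F : Fin n → MvPolynomial (Fin n) K} {p q : MvPolynomial (Fin n) K}
    (hp : Nil F p) (hq : Nil F q) : Nil F (p + q) := by
  obtain ⟨a, ha⟩ := hp
  obtain ⟨b, hb⟩ := hq
  exact ⟨a + b, by
    rw [δ₁_iter_add, δ₁_iter_mono ha (Nat.le_add_right _ _),
      δ₁_iter_mono hb (Nat.le_add_left _ _), add_zero]⟩

lemma δ₁_bind₁ (F : Fin n → MvPolynomial (Fin n) K) (p : MvPolynomial (Fin n) K) :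
    δ₁ F (bind₁ F p) = bind₁ F (δ₁ F p) := by
  simp [δ₁, map_sub]

lemma nil_bind₁ {F : Fin n → MvPolynomial (Fin n) K} {p : MvPolynomial (Fin n) K}
    (hp : Nil F p) : Nil F (bind₁ F p) := by
  obtain ⟨a, ha⟩ := hp
  refine ⟨a, ?_⟩
  have : ∀ k q, (δ₁ F)^[k] (bind₁ F q) = bind₁ F ((δ₁ F)^[k] q) := by
    intro k
    induction k with
    | zero => intro q; rfl
    | succ k ih =>
      intro q
      rw [Function.iterate_succ_apply, δ₁_bind₁, ih, Function.iterate_succ_apply]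
  rw [this, ha, map_zero]

lemma δ₁_mul (F : Fin n → MvPolynomial (Fin n) K) (p q : MvPolynomial (Fin n) K) :
    δ₁ F (p * q) = δ₁ F p * bind₁ F q + p * δ₁ F q := by
  simp only [δ₁, map_mul]; ring

lemma nil_mul_aux {F : Fin n → MvPolynomial (Fin n) K} :
    ∀ c a b (p q : MvPolynomial (Fin n) K), a + b = c →
      (δ₁ F)^[a] p = 0 → (δ₁ F)^[b] q = 0 → Nil F (p * q) := by
  intro c
  induction c using Nat.strong_induction_on with
  | _ c ih =>
    intro a b p q habc hp hq
    match a, b with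
    | 0, b =>
      simp only [Function.iterate_zero, id_eq] at hp
      subst hp; rw [zero_mul]; exact nil_zero F
    | a + 1, 0 =>
      simp only [Function.iterate_zero, id_eq] at hq
      subst hq; rw [mul_zero]; exact nil_zero F
    | a + 1, b + 1 =>
      -- δ(pq) = δp * σq + p * δq
      have h1 : (δ₁ F)^[a] (δ₁ F p) = 0 := by
        rw [← Function.iterate_succ_apply]; exact hp
      have h2 : (δ₁ F)^[b + 1] (bind₁ F q) = 0 := by
        have : ∀ k r, (δ₁ F)^[k] (bind₁ F r) = bind₁ F ((δ₁ F)^[k] r) := by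
          intro k
          induction k with
          | zero => intro r; rfl
          | succ k ih2 =>
            intro r
            rw [Function.iterate_succ_apply, δ₁_bind₁, ih2, Function.iterate_succ_apply]
        rw [this, hq, map_zero]
      have h3 : (δ₁ F)^[b] (δ₁ F q) = 0 := by
        rw [← Function.iterate_succ_apply]; exact hq
      have n1 : Nil F (δ₁ F p * bind₁ F q) := by
        refine ih (a + (b + 1)) ?_ a (b + 1) _ _ rfl h1 h2
        omega
      have n2 : Nil F (p * δ₁ F q) := by
        refine ih ((a + 1) + b) ?_ (a + 1) b _ _ rfl hp h3
        omega
      have : Nil F (δ₁ F (p * q)) := by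
        rw [δ₁_mul]; exact nil_add n1 n2
      obtain ⟨N, hN⟩ := this
      exact ⟨N + 1, by rwa [Function.iterate_succ_apply]⟩

lemma nil_mul {F : Fin n → MvPolynomial (Fin n) K} {p q : MvPolynomial (Fin n) K}
    (hp : Nil F p) (hq : Nil F q) : Nil F (p * q) := by
  obtain ⟨a, ha⟩ := hp
  obtain ⟨b, hb⟩ := hq
  exact nil_mul_aux (a + b) a b p q rfl ha hb

lemma nil_all {F : Fin n → MvPolynomial (Fin n) K}
    (hX : ∀ i, Nil F (X i)) (p : MvPolynomial (Fin n) K) : Nil F p := by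
  induction p using MvPolynomial.induction_on with
  | C a => exact nil_C F a
  | add p q hp hq => exact nil_add hp hq
  | mul_X p i hp => exact nil_mul hp (hX i)

lemma Δ_iter_apply (F : Fin n → MvPolynomial (Fin n) K) (k : ℕ)
    (P : Fin n → MvPolynomial (Fin n) K) (i : Fin n) :
    (Δ F)^[k] P i = (δ₁ F)^[k] (P i) := by
  induction k generalizing P with
  | zero => rfl
  | succ k ih =>
    rw [Function.iterate_succ_apply, Function.iterate_succ_apply, ih]
    rfl

lemma conj_step (F T Tinv : Fin n → MvPolynomial (Fin n) K)
    (hT₁ : PolyMap.comp T Tinv = PolyMap.id K n)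
    (P : Fin n → MvPolynomial (Fin n) K) :
    Δ (PolyMap.comp Tinv (PolyMap.comp F T)) (PolyMap.comp P T)
      = PolyMap.comp (Δ F P) T := by
  funext i
  have key : ∀ p : MvPolynomial (Fin n) K,
      bind₁ (PolyMap.comp Tinv (PolyMap.comp F T)) (bind₁ T p)
        = bind₁ T (bind₁ F p) := by
    intro p
    rw [bind₁_bind₁, bind₁_bind₁]
    have harg : (fun j => bind₁ (PolyMap.comp Tinv (PolyMap.comp F T)) (T j))
        = fun j => bind₁ T (F j) := by
      funext j
      have : bind₁ (PolyMap.comp Tinv (PolyMap.comp F T)) (T j)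
          = bind₁ (PolyMap.comp F T) (bind₁ Tinv (T j)) := by
        rw [bind₁_bind₁]; rfl
      rw [this]
      have h2 : bind₁ Tinv (T j) = X j := congrFun hT₁ j
      rw [h2, bind₁_X_right]
      rfl
    rw [harg]
  show bind₁ (PolyMap.comp Tinv (PolyMap.comp F T)) (bind₁ T (P i)) - bind₁ T (P i)
      = bind₁ T (bind₁ F (P i) - P i)
  rw [key, map_sub]

lemma conj_iter (F T Tinv : Fin n → MvPolynomial (Fin n) K)
    (hT₁ : PolyMap.comp T Tinv = PolyMap.id K n)
    (hT₂ : PolyMap.comp Tinv T = PolyMap.id K n) (k : ℕ) :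
    (Δ (PolyMap.comp Tinv (PolyMap.comp F T)))^[k] (PolyMap.id K n)
      = PolyMap.comp ((Δ F)^[k] Tinv) T := by
  induction k with
  | zero => simp only [Function.iterate_zero, id_eq]; exact hT₂.symm
  | succ k ih =>
    rw [Function.iterate_succ_apply', ih, conj_step F T Tinv hT₁,
      Function.iterate_succ_apply']

end PascalAux

open PascalAux in
/-- Pascal finiteness is invariant under conjugation by an
invertible polynomial map. -/
theorem pascal_finite_conjugation_invariant {K : Type*} [Field K] {n : ℕ}
    (F T Tinv : Fin n → MvPolynomial (Fin n) K)
    (hT₁ : PolyMap.comp T Tinv = PolyMap.id K n)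
    (hT₂ : PolyMap.comp Tinv T = PolyMap.id K n)
    (hF : IsPascalFinite F) :
    IsPascalFinite (PolyMap.comp Tinv (PolyMap.comp F T)) := by
  obtain ⟨m, hm, hFm⟩ := hF
  have hX : ∀ i, Nil F (X i) := by
    intro i
    refine ⟨m, ?_⟩
    have := congrFun hFm i
    rw [Δ_iter_apply] at this
    simpa [PolyMap.id] using this
  have hTinv : ∀ i : Fin n, Nil F (Tinv i) := fun i => nil_all hX (Tinv i)
  choose N hN using hTinv
  set M := Finset.univ.sup N + 1 with hM
  refine ⟨M, Nat.succ_pos _, ?_⟩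
  rw [conj_iter F T Tinv hT₁ hT₂]
  have : (Δ F)^[M] Tinv = 0 := by
    funext i
    rw [Δ_iter_apply]
    exact δ₁_iter_mono (hN i)
      (le_trans (Finset.le_sup (Finset.mem_univ i)) (Nat.le_succ _))
  rw [this]
  funext i
  show bind₁ T ((0 : Fin n → MvPolynomial (Fin n) K) i) = 0
  simp
end

section
/- If F : K^n → K^n is a Pascal finite polynomial map, then for every positive integer r, the r-fold composition F^r is Pascal finite. -/
open MvPolynomial Finset

section Aux

variable {K : Type*} [CommRing K] {n : ℕ}

/-- `bind₁ F` as a linear endomorphism. -/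
noncomputable def TF (F : Fin n → MvPolynomial (Fin n) K) :
    Module.End K (MvPolynomial (Fin n) K) := (bind₁ F).toLinearMap

lemma delta_iterate (F P : Fin n → MvPolynomial (Fin n) K) (m : ℕ) (i : Fin n) :
    (Δ F)^[m] P i = ((TF F - 1) ^ m) (P i) := by
  induction m generalizing P with
  | zero => simp
  | succ m ih =>
      rw [Function.iterate_succ_apply, ih, pow_succ, Module.End.mul_apply]
      congr 1

lemma bind_pow (F : Fin n → MvPolynomial (Fin n) K) (r : ℕ)
    (p : MvPolynomial (Fin n) K) :
    bind₁ (PolyMap.pow F r) p = ((TF F) ^ r) p := by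
  induction r generalizing p with
  | zero => show (bind₁ X) p = p; simp
  | succ r ih =>
      have : PolyMap.pow F (r + 1) = fun i => bind₁ F (PolyMap.pow F r i) := rfl
      rw [this, ← bind₁_bind₁, ih, pow_succ', Module.End.mul_apply]
      rfl

end Aux

/-- compositional powers of a Pascal finite polynomial map are
Pascal finite. -/
theorem pow_pascal_finite {K : Type*} [Field K] {n : ℕ}
    (F : Fin n → MvPolynomial (Fin n) K) (hF : IsPascalFinite F)
    (r : ℕ) (hr : 0 < r) :
    IsPascalFinite (PolyMap.pow F r) := by
  obtain ⟨m, hm, h⟩ := hF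
  refine ⟨m, hm, ?_⟩
  funext i
  have h0 : ((TF F - 1) ^ m) (PolyMap.id K n i) = 0 := by
    have := congrFun h i
    rwa [delta_iterate] at this
  have hTF : TF (PolyMap.pow F r) = (TF F) ^ r :=
    LinearMap.ext (bind_pow F r)
  have hc : Commute (∑ j ∈ range r, (TF F) ^ j) (TF F - 1) :=
    Commute.sum_left _ _ _ fun j _ =>
      ((Commute.refl (TF F)).pow_left j).sub_right (Commute.one_right _)
  have hgeom : (TF F) ^ r - 1 = (∑ j ∈ range r, (TF F) ^ j) * (TF F - 1) :=
    (geom_sum_mul (TF F) r).symm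
  rw [Pi.zero_apply, delta_iterate, hTF, hgeom, hc.mul_pow, Module.End.mul_apply,
    h0, map_zero]
end

section
/- The inverse of a Pascal finite polynomial automorphism is Pascal finite: if F is a polynomial automorphism of K^n with Δ_F^m(Id) = 0, then G = F⁻¹ satisfies Δ_G^{m'}(Id) = 0 for some m'. -/
open MvPolynomial Finset

/- If `G` is a two-sided inverse of `F`, the substitution operators `σ_F = (· ∘ F)` and
`σ_G` are mutually inverse, hence commute, and `Δ_G = σ_G - 1 = -σ_G (σ_F - 1) = -σ_G Δ_F`.
Therefore `Δ_G^m = (-σ_G)^m Δ_F^m`, which kills every coordinate function killed by `Δ_F^m`. -/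

theorem sub_one_pow_eq_neg_pow_mul_sub_one_pow {R : Type*} [Ring R] {f g : R}
    (hgf : g * f = 1) (hfg : f * g = 1) (m : ℕ) :
    (g - 1) ^ m = (-g) ^ m * (f - 1) ^ m := by
  have hcomm : Commute (-g) (f - 1) :=
    ((show Commute g f from hgf.trans hfg.symm).sub_right (Commute.one_right g)).neg_left
  have hfactor : g - 1 = -g * (f - 1) := by rw [neg_mul, mul_sub, hgf, mul_one, neg_sub]
  rw [hfactor, hcomm.mul_pow]

namespace PolyMap

variable {K : Type*} [CommRing K] {n : ℕ}

noncomputable def substEnd (F : Fin n → MvPolynomial (Fin n) K) :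
    Module.End K (MvPolynomial (Fin n) K) :=
  (bind₁ F).toLinearMap

theorem substEnd_mul_substEnd_of_comp_eq_id {F G : Fin n → MvPolynomial (Fin n) K}
    (h : PolyMap.comp F G = PolyMap.id K n) : substEnd G * substEnd F = 1 := by
  refine LinearMap.ext fun p => ?_
  change bind₁ G (bind₁ F p) = p
  rw [bind₁_bind₁]
  exact (congrArg (bind₁ · p) h).trans (AlgHom.congr_fun bind₁_X_left p)

theorem Δ_iterate_apply (F P : Fin n → MvPolynomial (Fin n) K) (m : ℕ) (i : Fin n) :
    (Δ F)^[m] P i = ((substEnd F - 1) ^ m) (P i) := by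
  induction m generalizing P with
  | zero => rfl
  | succ m ih =>
    rw [Function.iterate_succ_apply, ih, pow_succ, Module.End.mul_apply]
    rfl

end PolyMap

/-- the inverse of a Pascal finite polynomial automorphism is
Pascal finite. -/
theorem inverse_pascal_finite {K : Type*} [Field K] {n : ℕ}
    (F G : Fin n → MvPolynomial (Fin n) K)
    (hinv₁ : PolyMap.comp F G = PolyMap.id K n)
    (hinv₂ : PolyMap.comp G F = PolyMap.id K n)
    (m : ℕ) (hm : 0 < m) (hPF : (Δ F)^[m] (PolyMap.id K n) = 0) :
    ∃ m' : ℕ, 0 < m' ∧ (Δ G)^[m'] (PolyMap.id K n) = 0 := by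
  refine ⟨m, hm, funext fun i => ?_⟩
  have hF : ((PolyMap.substEnd F - 1) ^ m) (PolyMap.id K n i) = 0 := by
    rw [← PolyMap.Δ_iterate_apply, hPF, Pi.zero_apply]
  have hGF := PolyMap.substEnd_mul_substEnd_of_comp_eq_id hinv₁
  have hFG := PolyMap.substEnd_mul_substEnd_of_comp_eq_id hinv₂
  rw [PolyMap.Δ_iterate_apply, sub_one_pow_eq_neg_pow_mul_sub_one_pow hGF hFG,
    Module.End.mul_apply, hF, map_zero, Pi.zero_apply]
end

section
/- The Nagata map F(X_1,X_2,X_3) = (X_1 − 2(X_1X_3+X_2²)X_2 − (X_1X_3+X_2²)²X_3, X_2 + (X_1X_3+X_2²)X_3, X_3) is Pascal finite: specifically Δ_F³(Id)_1 = 0, Δ_F²(Id)_2 = 0, and Δ_F(Id)_3 = 0, so Δ_F³(Id) = 0. -/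
open MvPolynomial Finset

/-- the Nagata automorphism is Pascal finite:
`Δ³(Id)₁ = 0`, `Δ²(Id)₂ = 0`, `Δ(Id)₃ = 0`, hence `Δ³(Id) = 0`. -/
theorem nagata_pascal_finite {K : Type*} [Field K] [CharZero K]
    (w : MvPolynomial (Fin 3) K) (hw : w = X 0 * X 2 + (X 1) ^ 2)
    (F : Fin 3 → MvPolynomial (Fin 3) K)
    (hF : F = ![X 0 - C 2 * w * X 1 - w ^ 2 * X 2, X 1 + w * X 2, X 2]) :
    ((Δ F)^[3] (PolyMap.id K 3) 0 = 0) ∧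
    ((Δ F)^[2] (PolyMap.id K 3) 1 = 0) ∧
    ((Δ F)^[1] (PolyMap.id K 3) 2 = 0) ∧
    (Δ F)^[3] (PolyMap.id K 3) = 0 := by
  have hF0 : F 0 = X 0 - C 2 * w * X 1 - w ^ 2 * X 2 := by rw [hF]; rfl
  have hF1 : F 1 = X 1 + w * X 2 := by rw [hF]; rfl
  have hF2 : F 2 = X 2 := by rw [hF]; rfl
  have hC2 : (C 2 : MvPolynomial (Fin 3) K) = 2 := map_ofNat _ 2
  have hw' : bind₁ F w = w := by
    rw [hw]
    simp only [map_add, map_mul, map_pow, bind₁_X_right, hF0, hF1, hF2, hC2, map_ofNat]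
    ring
  have hD1 : Δ F (PolyMap.id K 3) = ![-(C 2 * w * X 1) - w ^ 2 * X 2, w * X 2, 0] := by
    funext i
    fin_cases i <;>
      simp [Δ, PolyMap.id, bind₁_X_right, hF0, hF1, hF2, hC2, map_ofNat] <;> ring
  have hD2 : Δ F ![-(C 2 * w * X 1) - w ^ 2 * X 2, w * X 2, 0]
      = ![-(C 2 * w ^ 2 * X 2), 0, 0] := by
    funext i
    fin_cases i <;>
      simp [Δ, map_sub, map_add, map_mul, map_pow, bind₁_X_right, hw', hF0, hF1, hF2, hC2, map_ofNat] <;> ring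
  have hD3 : Δ F ![-(C 2 * w ^ 2 * X 2), (0 : MvPolynomial (Fin 3) K), 0] = 0 := by
    funext i
    fin_cases i <;>
      simp [Δ, map_sub, map_add, map_mul, map_pow, bind₁_X_right, hw', hF0, hF1, hF2, hC2, map_ofNat]
  have H3 : (Δ F)^[3] (PolyMap.id K 3) = 0 := by
    show Δ F (Δ F (Δ F (PolyMap.id K 3))) = 0
    rw [hD1, hD2, hD3]
  have H2 : (Δ F)^[2] (PolyMap.id K 3) = ![-(C 2 * w ^ 2 * X 2), 0, 0] := by
    show Δ F (Δ F (PolyMap.id K 3)) = _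
    rw [hD1, hD2]
  refine ⟨by rw [H3]; rfl, by rw [H2]; simp, ?_, H3⟩
  rw [show (Δ F)^[1] (PolyMap.id K 3) = Δ F (PolyMap.id K 3) from rfl, hD1]
  simp
end

section
/- Let H : ℚ⁵ → ℚ⁵ be the Vasyunin map H = (0, X_1X_3, X_1X_4 + ½X_2², X_1X_5 − X_2X_3, ½X_3²). Then the Jacobian matrix J_H is nilpotent of nilpotency index 5, i.e., (J_H)⁵ = 0 and (J_H)⁴ ≠ 0 as matrices over ℚ[X_1,…,X_5]. -/
open MvPolynomial Finset

/-- The Vasyunin map `H = (0, X₁X₃, X₁X₄ + ½X₂², X₁X₅ − X₂X₃, ½X₃²)` on `ℚ⁵`. -/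
noncomputable def VasyuninH : Fin 5 → MvPolynomial (Fin 5) ℚ :=
  ![0, X 0 * X 2, X 0 * X 3 + C (1/2 : ℚ) * (X 1) ^ 2,
    X 0 * X 4 - X 1 * X 2, C (1/2 : ℚ) * (X 2) ^ 2]

set_option maxHeartbeats 4000000 in
/-- the Jacobian matrix of the Vasyunin map is nilpotent of
nilpotency index exactly 5. -/
theorem vasyunin_jacobian_nilpotent_index_five
    (J : Matrix (Fin 5) (Fin 5) (MvPolynomial (Fin 5) ℚ))
    (hJ : J = Matrix.of fun i j => pderiv j (VasyuninH i)) :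
    J ^ 5 = 0 ∧ J ^ 4 ≠ 0 := by
  have hJ' : J = !![0, 0, 0, 0, 0;
      X 2, 0, X 0, 0, 0;
      X 3, X 1, 0, X 0, 0;
      X 4, -X 2, -X 1, 0, X 0;
      0, 0, X 2, 0, 0] := by
    subst hJ
    refine Matrix.ext fun i j => ?_
    fin_cases i <;> fin_cases j <;>
      simp [VasyuninH, Matrix.vecHead, Matrix.vecTail] <;>
      rw [← map_ofNat (C : ℚ →+* _) 2, ← mul_assoc, ← C_mul] <;> norm_num
  have h2 : J ^ 2 = !![0, 0, 0, 0, 0;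
      X 0 * X 3, X 0 * X 1, 0, X 0 ^ 2, 0;
      X 1 * X 2 + X 0 * X 4, -(X 0 * X 2), 0, 0, X 0 ^ 2;
      -(X 2 ^ 2) - X 1 * X 3, -(X 1 ^ 2), 0, -(X 0 * X 1), 0;
      X 2 * X 3, X 1 * X 2, 0, X 0 * X 2, 0] := by
    rw [pow_two, hJ']
    refine Matrix.ext fun i j => ?_
    fin_cases i <;> fin_cases j <;>
      simp [Matrix.mul_apply, Fin.sum_univ_five, Matrix.vecHead, Matrix.vecTail] <;> ring
  have h4 : J ^ 4 = !![0, 0, 0, 0, 0;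
      -(X 0 ^ 2 * X 2 ^ 2), 0, 0, 0, 0;
      0, 0, 0, 0, 0;
      X 0 * X 1 * X 2 ^ 2, 0, 0, 0, 0;
      -(X 0 * X 2 ^ 3), 0, 0, 0, 0] := by
    have : J ^ 4 = J ^ 2 * J ^ 2 := by rw [← pow_add]
    rw [this, h2]
    refine Matrix.ext fun i j => ?_
    fin_cases i <;> fin_cases j <;>
      simp [Matrix.mul_apply, Fin.sum_univ_five, Matrix.vecHead, Matrix.vecTail] <;> ring
  constructor
  · have : J ^ 5 = J ^ 4 * J := by rw [← pow_succ]
    rw [this, h4, hJ']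
    refine Matrix.ext fun i j => ?_
    fin_cases i <;> fin_cases j <;>
      simp [Matrix.mul_apply, Fin.sum_univ_five, Matrix.vecHead, Matrix.vecTail] <;> ring
  · intro h
    rw [h4] at h
    have h10 : -(X 0 ^ 2 * X 2 ^ 2 : MvPolynomial (Fin 5) ℚ) = 0 := by
      have := congrFun (congrFun h 1) 0
      simpa using this
    have := congrArg (eval (fun _ => (1 : ℚ))) h10
    simp at this
end

section
/- Let H be the Vasyunin map on ℚ⁵. Then J_H is not strongly nilpotent: for e_1 = (1,0,0,0,0) and e_2 = (0,1,0,0,0), all positive powers of the constant matrix J_H(e_1)·J_H(e_2) are nonzero. -/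
open MvPolynomial Finset

/-- The Jacobian matrix of the Vasyunin map evaluated at a point `v ∈ ℚ⁵`. -/
noncomputable def VasyuninJ (v : Fin 5 → ℚ) : Matrix (Fin 5) (Fin 5) ℚ :=
  Matrix.of fun i j => eval v (pderiv j (VasyuninH i))


set_option maxHeartbeats 2000000 in
lemma vasJ1 : VasyuninJ (Pi.single 0 1) =
    !![0,0,0,0,0; 0,0,1,0,0; 0,0,0,1,0; 0,0,0,0,1; 0,0,0,0,0] := by
  ext i j
  fin_cases i <;> fin_cases j <;>
    simp [VasyuninJ, VasyuninH, Pi.single_apply, Matrix.vecHead, Matrix.vecTail]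

set_option maxHeartbeats 2000000 in
lemma vasJ2 : VasyuninJ (Pi.single 1 1) =
    !![0,0,0,0,0; 0,0,0,0,0; 0,1,0,0,0; 0,0,-1,0,0; 0,0,0,0,0] := by
  ext i j
  fin_cases i <;> fin_cases j <;>
    simp [VasyuninJ, VasyuninH, Pi.single_apply, Matrix.vecHead, Matrix.vecTail]

set_option maxHeartbeats 2000000 in
lemma vasM : VasyuninJ (Pi.single 0 1) * VasyuninJ (Pi.single 1 1) =
    !![0,0,0,0,0; 0,1,0,0,0; 0,0,-1,0,0; 0,0,0,0,0; 0,0,0,0,0] := by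
  rw [vasJ1, vasJ2]
  ext i j
  fin_cases i <;> fin_cases j <;>
    simp [Matrix.mul_apply, Fin.sum_univ_five, Matrix.vecHead, Matrix.vecTail]

lemma vasE_pow (k : ℕ) (hk : 0 < k) :
    ((!![0,0,0,0,0; 0,1,0,0,0; 0,0,-1,0,0; 0,0,0,0,0; 0,0,0,0,0] : Matrix (Fin 5) (Fin 5) ℚ) ^ k) 1 1 = 1 := by
  induction k with
  | zero => omega
  | succ n ih =>
    rcases Nat.eq_zero_or_pos n with h | h
    · subst h; norm_num
    · rw [pow_succ']
      have := ih h
      simp [Matrix.mul_apply, Fin.sum_univ_five, this]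

set_option maxHeartbeats 2000000 in
/-- the Vasyunin Jacobian is not strongly nilpotent: all positive
powers of `J_H(e₁) · J_H(e₂)` are nonzero. -/
theorem vasyunin_not_strongly_nilpotent
    (e₁ e₂ : Fin 5 → ℚ) (he₁ : e₁ = Pi.single 0 1) (he₂ : e₂ = Pi.single 1 1) :
    (∀ k : ℕ, 0 < k → (VasyuninJ e₁ * VasyuninJ e₂) ^ k ≠ 0) ∧
    ¬ (∀ v₁ v₂ v₃ v₄ v₅ : Fin 5 → ℚ,
        VasyuninJ v₁ * VasyuninJ v₂ * VasyuninJ v₃ * VasyuninJ v₄ * VasyuninJ v₅ = 0) := by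
  subst he₁ he₂
  constructor
  · intro k hk h
    have h11 := congrFun (congrFun h 1) 1
    rw [vasM] at h11
    rw [vasE_pow k hk] at h11
    simp at h11
  · intro h
    have := h (Pi.single 0 1) (Pi.single 1 1) (Pi.single 0 1) (Pi.single 1 1) (Pi.single 0 1)
    rw [show VasyuninJ (Pi.single 0 1) * VasyuninJ (Pi.single 1 1) * VasyuninJ (Pi.single 0 1) *
        VasyuninJ (Pi.single 1 1) * VasyuninJ (Pi.single 0 1)
        = (VasyuninJ (Pi.single 0 1) * VasyuninJ (Pi.single 1 1)) *
          ((VasyuninJ (Pi.single 0 1) * VasyuninJ (Pi.single 1 1)) * VasyuninJ (Pi.single 0 1)) by simp [mul_assoc]]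
      at this
    rw [vasM, vasJ1] at this
    have h12 := congrFun (congrFun this 1) 2
    simp [Matrix.mul_apply, Fin.sum_univ_five] at h12
end

section
/- The Vasyunin map F = Id + H on ℚ⁵, with H = (0, X_1X_3, X_1X_4 + ½X_2², X_1X_5 − X_2X_3, ½X_3²), is a polynomial automorphism: its inverse is G(Y) = (Y_1, Y_2 − Y_1Y_3 + Y_1²Y_4 − Y_1³Y_5 + ½Y_1Y_2², Y_3 − Y_1Y_4 + Y_1²Y_5 − ½Y_2², G_4(Y), Y_5 − ½(Y_3 − Y_1Y_4 + Y_1²Y_5 − ½Y_2²)²), where G_4 is an explicit polynomial of degree 7, and G∘F = Id = F∘G. -/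
open MvPolynomial Finset

private lemma eval_bind {n : ℕ} (x : Fin n → ℚ) (g : Fin n → MvPolynomial (Fin n) ℚ)
    (φ : MvPolynomial (Fin n) ℚ) :
    eval x (bind₁ g φ) = eval (fun i => eval x (g i)) φ := by
  rw [show (eval x : MvPolynomial (Fin n) ℚ →+* ℚ) = eval₂Hom (RingHom.id ℚ) x from rfl,
    eval₂Hom_bind₁]
  rfl

set_option maxHeartbeats 2000000 in
/-- the Vasyunin map `F = Id + H` is a polynomial automorphism
with the explicit inverse `G` below. -/
theorem vasyunin_invertible
    (F G : Fin 5 → MvPolynomial (Fin 5) ℚ)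
    (hF : F = fun i => X i + VasyuninH i)
    (hG : G =
      ![X 0,
        X 1 - X 0 * X 2 + X 0 ^ 2 * X 3 - X 0 ^ 3 * X 4 + C (1/2 : ℚ) * X 0 * X 1 ^ 2,
        X 2 - X 0 * X 3 + X 0 ^ 2 * X 4 - C (1/2 : ℚ) * X 1 ^ 2,
        X 3 - C (1/2 : ℚ) * X 0 ^ 5 * X 4 ^ 2 + X 0 ^ 4 * X 3 * X 4
          + C (1/2 : ℚ) * X 0 ^ 3 * X 1 ^ 2 * X 4 - X 0 ^ 3 * X 2 * X 4
          - C (1/2 : ℚ) * X 0 ^ 3 * X 3 ^ 2 - C (1/2 : ℚ) * X 0 ^ 2 * X 1 ^ 2 * X 3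
          + X 0 ^ 2 * X 1 * X 4 + X 0 ^ 2 * X 2 * X 3
          - C (1/8 : ℚ) * X 0 * X 1 ^ 4 + C (1/2 : ℚ) * X 0 * X 1 ^ 2 * X 2
          - X 0 * X 1 * X 3 - C (1/2 : ℚ) * X 0 * X 2 ^ 2 - X 0 * X 4
          - C (1/2 : ℚ) * X 1 ^ 3 + X 1 * X 2,
        X 4 - C (1/2 : ℚ) *
          (X 2 - X 0 * X 3 + X 0 ^ 2 * X 4 - C (1/2 : ℚ) * X 1 ^ 2) ^ 2]) :
    PolyMap.comp G F = PolyMap.id ℚ 5 ∧ PolyMap.comp F G = PolyMap.id ℚ 5 := by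
  subst hF hG
  constructor <;> · funext i
                    apply MvPolynomial.funext
                    intro x
                    fin_cases i <;>
                    · simp [PolyMap.comp, PolyMap.id, VasyuninH, eval_bind]
                      try ring
end

section
/- For the Vasyunin automorphism F = Id + H on ℚ⁵, the degrees of the compositional iterates are unbounded: sup_{k≥0} deg(F^k) = ∞. More precisely, writing F^k for the k-fold composition, deg((F^k)_3) ≥ 2 + 2·deg((F^{k−3})_3) for all sufficiently large k. Consequently F is not locally finite and hence not Pascal finite. -/
open MvPolynomial Finset

/-- A polynomial map is locally finite if its compositional powers satisfy a
nontrivial linear relation with coefficients in `K`. -/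
def PolyMap.LocallyFinite {K : Type*} [CommRing K] {n : ℕ}
    (F : Fin n → MvPolynomial (Fin n) K) : Prop :=
  ∃ (d : ℕ) (a : ℕ → K), (∃ j, j ≤ d ∧ a j ≠ 0) ∧
    ∀ i, ∑ l ∈ Finset.range (d + 1), C (a l) * (PolyMap.pow F l i) = 0

-- basic lemmas
lemma pow_zero' {K : Type*} [CommRing K] {n : ℕ} (F : Fin n → MvPolynomial (Fin n) K) (i) :
    PolyMap.pow F 0 i = X i := rfl

lemma pow_succ_right {K : Type*} [CommRing K] {n : ℕ} (F : Fin n → MvPolynomial (Fin n) K) (k i) :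
    PolyMap.pow F (k+1) i = bind₁ F (PolyMap.pow F k i) := rfl

lemma pow_succ_left {K : Type*} [CommRing K] {n : ℕ} (F : Fin n → MvPolynomial (Fin n) K) (k i) :
    PolyMap.pow F (k+1) i = bind₁ (PolyMap.pow F k) (F i) := by
  induction k generalizing i with
  | zero =>
      show bind₁ F (X i) = bind₁ (fun j => X j) (F i)
      rw [bind₁_X_right, bind₁_X_left]
      rfl
  | succ k ih =>
      rw [pow_succ_right, ih, bind₁_bind₁]
      rfl

section vas
variable (F : Fin 5 → MvPolynomial (Fin 5) ℚ)

lemma hF0 (hF : F = fun i => X i + VasyuninH i) : F 0 = X 0 := by subst hF; simp [VasyuninH]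
lemma hF1 (hF : F = fun i => X i + VasyuninH i) : F 1 = X 1 + X 0 * X 2 := by subst hF; simp [VasyuninH]
lemma hF2 (hF : F = fun i => X i + VasyuninH i) : F 2 = X 2 + (X 0 * X 3 + C (1/2 : ℚ) * (X 1)^2) := by subst hF; simp [VasyuninH]
lemma hF3 (hF : F = fun i => X i + VasyuninH i) : F 3 = X 3 + (X 0 * X 4 - X 1 * X 2) := by subst hF; simp [VasyuninH]
lemma hF4 (hF : F = fun i => X i + VasyuninH i) : F 4 = X 4 + C (1/2 : ℚ) * (X 2)^2 := by subst hF; simp [VasyuninH]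

lemma pow0 (hF : F = fun i => X i + VasyuninH i) (k) : PolyMap.pow F k 0 = X 0 := by
  induction k with
  | zero => rfl
  | succ k ih => rw [pow_succ_left, hF0 F hF, bind₁_X_right, ih]

lemma pow1 (hF : F = fun i => X i + VasyuninH i) (k) : PolyMap.pow F (k+1) 1
    = PolyMap.pow F k 1 + X 0 * PolyMap.pow F k 2 := by
  rw [pow_succ_left, hF1 F hF]
  simp [bind₁_X_right, pow0 F hF]

lemma pow2 (hF : F = fun i => X i + VasyuninH i) (k) : PolyMap.pow F (k+1) 2
    = PolyMap.pow F k 2 + (X 0 * PolyMap.pow F k 3 + C (1/2 : ℚ) * (PolyMap.pow F k 1)^2) := by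
  rw [pow_succ_left, hF2 F hF]
  simp [bind₁_X_right, pow0 F hF]

lemma pow3 (hF : F = fun i => X i + VasyuninH i) (k) : PolyMap.pow F (k+1) 3
    = PolyMap.pow F k 3 + (X 0 * PolyMap.pow F k 4 - PolyMap.pow F k 1 * PolyMap.pow F k 2) := by
  rw [pow_succ_left, hF3 F hF]
  simp [bind₁_X_right, pow0 F hF]

lemma pow4 (hF : F = fun i => X i + VasyuninH i) (k) : PolyMap.pow F (k+1) 4
    = PolyMap.pow F k 4 + C (1/2 : ℚ) * (PolyMap.pow F k 2)^2 := by
  rw [pow_succ_left, hF4 F hF]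
  simp [bind₁_X_right, pow0 F hF]

end vas

-- U sequence
def uv : ℕ → ℕ × ℕ × ℕ × ℕ
  | 0 => (1,1,1,1)
  | k+1 => ((uv k).2.1 + 1, 2*(uv k).1, (uv k).1 + (uv k).2.1, 2*(uv k).2.1)

def U1 (k : ℕ) := (uv k).1
def U2 (k : ℕ) := (uv k).2.1
def U3 (k : ℕ) := (uv k).2.2.1
def U4 (k : ℕ) := (uv k).2.2.2

lemma U1s (k) : U1 (k+1) = U2 k + 1 := rfl
lemma U2s (k) : U2 (k+1) = 2 * U1 k := rfl
lemma U3s (k) : U3 (k+1) = U1 k + U2 k := rfl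
lemma U4s (k) : U4 (k+1) = 2 * U2 k := rfl
lemma U10 : U1 0 = 1 := rfl
lemma U20 : U2 0 = 1 := rfl
lemma U30 : U3 0 = 1 := rfl
lemma U40 : U4 0 = 1 := rfl

lemma uinv (k) : U1 k ≤ U2 k ∧ U2 k ≤ U3 k ∧ U3 k ≤ U4 k ∧
    U3 k + 1 ≤ 2 * U1 k ∧ U4 k + 1 ≤ U1 k + U2 k := by
  induction k with
  | zero => simp [U10, U20, U30, U40]
  | succ k ih => rw [U1s, U2s, U3s, U4s]; omega

lemma U2mono : StrictMono U2 := by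
  apply strictMono_nat_of_lt_succ
  intro k
  have := uinv k
  rw [U2s]; omega

lemma U2rec (k) : U2 (k+2) = 2 + 2 * U2 k := by
  rw [U2s, U1s]; ring

lemma U2ge (k) : k + 1 ≤ U2 k := by
  induction k with
  | zero => simp [U20]
  | succ k ih => have h : U2 k < U2 (k+1) := U2mono (by omega); omega

lemma U3strict (k) : U3 (k+1) + 2 ≤ 2 * U1 (k+1) := by
  have := uinv k
  rw [U3s, U1s]; omega

section deg
variable (F : Fin 5 → MvPolynomial (Fin 5) ℚ)

lemma upperBound (hF : F = fun i => X i + VasyuninH i) (k : ℕ) :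
    (PolyMap.pow F k 1).totalDegree ≤ U1 k ∧ (PolyMap.pow F k 2).totalDegree ≤ U2 k ∧
    (PolyMap.pow F k 3).totalDegree ≤ U3 k ∧ (PolyMap.pow F k 4).totalDegree ≤ U4 k := by
  induction k with
  | zero =>
      refine ⟨?_, ?_, ?_, ?_⟩ <;> simp [pow_zero', U10, U20, U30, U40, totalDegree_X]
  | succ k ih =>
      obtain ⟨h1, h2, h3, h4⟩ := ih
      have hinv := uinv k
      have hX : (X 0 : MvPolynomial (Fin 5) ℚ).totalDegree = 1 := totalDegree_X _
      have hXm : ∀ p : MvPolynomial (Fin 5) ℚ, (X 0 * p).totalDegree ≤ 1 + p.totalDegree := by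
        intro p; exact le_trans (totalDegree_mul _ _) (by rw [hX])
      have hCsq : ∀ p : MvPolynomial (Fin 5) ℚ,
          (C (1/2 : ℚ) * p^2).totalDegree ≤ 2 * p.totalDegree := by
        intro p
        refine le_trans (totalDegree_mul _ _) ?_
        rw [totalDegree_C]
        simpa using totalDegree_pow p 2
      refine ⟨?_, ?_, ?_, ?_⟩
      · rw [pow1 F hF, U1s]
        refine le_trans (totalDegree_add _ _) (max_le ?_ ?_)
        · omega
        · exact le_trans (hXm _) (by omega)
      · rw [pow2 F hF, U2s]
        refine le_trans (totalDegree_add _ _) (max_le ?_ (le_trans (totalDegree_add _ _)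
          (max_le ?_ ?_)))
        · omega
        · exact le_trans (hXm _) (by omega)
        · exact le_trans (hCsq _) (by omega)
      · rw [pow3 F hF, U3s, sub_eq_add_neg]
        refine le_trans (totalDegree_add _ _) (max_le ?_ (le_trans (totalDegree_add _ _)
          (max_le ?_ ?_)))
        · omega
        · exact le_trans (hXm _) (by omega)
        · rw [totalDegree_neg]
          exact le_trans (totalDegree_mul _ _) (by omega)
      · rw [pow4 F hF, U4s]
        refine le_trans (totalDegree_add _ _) (max_le ?_ ?_)
        · omega
        · exact le_trans (hCsq _) (by omega)

end deg

-- natDegree of aeval at degree ≤ 1 substitutions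
lemma natDegree_aeval_le_totalDegree {n : ℕ} (f : Fin n → Polynomial ℚ)
    (hf : ∀ i, (f i).natDegree ≤ 1) (p : MvPolynomial (Fin n) ℚ) :
    (aeval f p).natDegree ≤ p.totalDegree := by
  rw [aeval_def, eval₂_eq]
  apply Polynomial.natDegree_sum_le_of_forall_le
  intro d hd
  refine le_trans Polynomial.natDegree_mul_le ?_
  have h1 : (algebraMap ℚ (Polynomial ℚ) (coeff d p)).natDegree = 0 := by
    simpa using Polynomial.natDegree_C _
  rw [h1, zero_add]
  refine le_trans (Polynomial.natDegree_prod_le _ _) ?_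
  have step : ∀ i ∈ d.support, (f i ^ d i).natDegree ≤ d i :=
    fun i _ => le_trans Polynomial.natDegree_pow_le
      (by simpa using Nat.mul_le_mul_left (d i) (hf i))
  refine le_trans (Finset.sum_le_sum step) ?_
  calc ∑ i ∈ d.support, d i = d.sum fun _ e => e := by simp [Finsupp.sum]
    _ ≤ p.totalDegree := Finset.le_sup (f := fun d => d.sum fun _ e => e) hd

noncomputable def psiV : MvPolynomial (Fin 5) ℚ →ₐ[ℚ] Polynomial ℚ :=
  aeval ![-Polynomial.X, -Polynomial.X, Polynomial.X, -Polynomial.X, Polynomial.X]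

lemma psiV_le (p : MvPolynomial (Fin 5) ℚ) : (psiV p).natDegree ≤ p.totalDegree := by
  apply natDegree_aeval_le_totalDegree
  intro i
  fin_cases i <;> simp [Polynomial.natDegree_X_le]

lemma aux_add (p q : Polynomial ℚ) (hq : 0 < q.leadingCoeff) (h : p.natDegree < q.natDegree) :
    0 < (p+q).leadingCoeff ∧ (p+q).natDegree = q.natDegree := by
  have hd : p.degree < q.degree := Polynomial.degree_lt_degree h
  exact ⟨by rw [Polynomial.leadingCoeff_add_of_degree_lt hd]; exact hq,
         Polynomial.natDegree_add_eq_right_of_natDegree_lt h⟩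

section lower
variable (F : Fin 5 → MvPolynomial (Fin 5) ℚ)

lemma psi0 : psiV (X 0 : MvPolynomial (Fin 5) ℚ) = -Polynomial.X := by
  simp [psiV]

lemma psi1_succ (hF : F = fun i => X i + VasyuninH i) (k : ℕ) :
    psiV (PolyMap.pow F (k+1) 1)
      = psiV (PolyMap.pow F k 1) + (-Polynomial.X) * psiV (PolyMap.pow F k 2) := by
  rw [pow1 F hF, map_add, map_mul, psi0]

lemma psi2_succ (hF : F = fun i => X i + VasyuninH i) (k : ℕ) :
    psiV (PolyMap.pow F (k+1) 2)
      = psiV (PolyMap.pow F k 2) + ((-Polynomial.X) * psiV (PolyMap.pow F k 3)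
          + Polynomial.C (1/2 : ℚ) * (psiV (PolyMap.pow F k 1))^2) := by
  rw [pow2 F hF, map_add, map_add, map_mul, map_mul, map_pow, psi0]
  congr 2
  simp [psiV]

lemma lowerAB (hF : F = fun i => X i + VasyuninH i) : ∀ k, 1 ≤ k →
    (0 < (-(psiV (PolyMap.pow F k 1))).leadingCoeff
      ∧ (-(psiV (PolyMap.pow F k 1))).natDegree = U1 k) ∧
    (0 < (psiV (PolyMap.pow F k 2)).leadingCoeff
      ∧ (psiV (PolyMap.pow F k 2)).natDegree = U2 k) := by
  intro k hk
  induction k with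
  | zero => omega
  | succ k ih =>
    rcases Nat.eq_or_lt_of_le hk with h1 | h1
    · -- base case k+1 = 1, i.e. k = 0
      have hk0 : k = 0 := by omega
      subst hk0
      have e1 : -(psiV (PolyMap.pow F 1 1)) = Polynomial.X + Polynomial.X^2 := by
        rw [psi1_succ F hF 0]
        simp only [pow_zero']
        simp [psiV]
        ring
      have e2 : psiV (PolyMap.pow F 1 2)
          = Polynomial.X + Polynomial.C (3/2 : ℚ) * Polynomial.X^2 := by
        rw [psi2_succ F hF 0]
        simp only [pow_zero']
        simp [psiV]
        ring_nf
        rw [show (3/2 : ℚ) = 1/2 + 1 by norm_num, map_add, map_one]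
        ring
      constructor
      · rw [e1]
        have := aux_add Polynomial.X (Polynomial.X^2)
          (by rw [Polynomial.leadingCoeff_X_pow]; norm_num)
          (by rw [Polynomial.natDegree_X, Polynomial.natDegree_X_pow]; norm_num)
        simpa [U1s, U20] using this
      · rw [e2]
        have hlc : (Polynomial.C (3/2 : ℚ) * Polynomial.X^2).leadingCoeff = 3/2 := by
          rw [Polynomial.leadingCoeff_mul, Polynomial.leadingCoeff_C,
            Polynomial.leadingCoeff_X_pow, mul_one]
        have hnd : (Polynomial.C (3/2 : ℚ) * Polynomial.X^2).natDegree = 2 := by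
          rw [Polynomial.natDegree_C_mul (by norm_num), Polynomial.natDegree_X_pow]
        have := aux_add Polynomial.X (Polynomial.C (3/2 : ℚ) * Polynomial.X^2)
          (by rw [hlc]; norm_num)
          (by rw [Polynomial.natDegree_X, hnd]; norm_num)
        rw [hnd] at this
        simpa [U2s, U10] using this
    · -- inductive step, k ≥ 1
      have hk1 : 1 ≤ k := by omega
      obtain ⟨⟨ha0, haD⟩, ⟨hb0, hbD⟩⟩ := ih hk1
      have hinv := uinv k
      have hbne : psiV (PolyMap.pow F k 2) ≠ 0 := fun h0 => by simp [h0] at hb0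
      have hane : psiV (PolyMap.pow F k 1) ≠ 0 := fun h0 => by simp [h0] at ha0
      constructor
      · -- component 1
        have e : -(psiV (PolyMap.pow F (k+1) 1))
            = (-(psiV (PolyMap.pow F k 1))) + Polynomial.X * psiV (PolyMap.pow F k 2) := by
          rw [psi1_succ F hF k]; ring
        have hq0 : 0 < (Polynomial.X * psiV (PolyMap.pow F k 2)).leadingCoeff := by
          rw [Polynomial.leadingCoeff_mul, Polynomial.leadingCoeff_X, one_mul]; exact hb0
        have hqD : (Polynomial.X * psiV (PolyMap.pow F k 2)).natDegree = 1 + U2 k := by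
          rw [Polynomial.natDegree_mul Polynomial.X_ne_zero hbne,
            Polynomial.natDegree_X, hbD]
        have := aux_add (-(psiV (PolyMap.pow F k 1))) _ hq0 (by rw [hqD, haD]; omega)
        rw [← e, hqD] at this
        refine ⟨this.1, ?_⟩
        rw [this.2, U1s]; omega
      · -- component 2
        have e : psiV (PolyMap.pow F (k+1) 2)
            = (psiV (PolyMap.pow F k 2) + (-Polynomial.X) * psiV (PolyMap.pow F k 3))
              + Polynomial.C (1/2 : ℚ) * (psiV (PolyMap.pow F k 1))^2 := by
          rw [psi2_succ F hF k]; ring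
        set q := Polynomial.C (1/2 : ℚ) * (psiV (PolyMap.pow F k 1))^2 with hqdef
        have hqD : q.natDegree = 2 * U1 k := by
          rw [hqdef, Polynomial.natDegree_C_mul (by norm_num), Polynomial.natDegree_pow]
          have : (psiV (PolyMap.pow F k 1)).natDegree = U1 k := by
            rw [← Polynomial.natDegree_neg]; exact haD
          omega
        have hq0 : 0 < q.leadingCoeff := by
          rw [hqdef, Polynomial.leadingCoeff_mul, Polynomial.leadingCoeff_C,
            Polynomial.leadingCoeff_pow]
          have : (psiV (PolyMap.pow F k 1)).leadingCoeff ≠ 0 :=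
            Polynomial.leadingCoeff_ne_zero.mpr hane
          positivity
        -- degree of the small part
        have hg : (psiV (PolyMap.pow F k 3)).natDegree ≤ U3 k :=
          le_trans (psiV_le _) (upperBound F hF k).2.2.1
        have hp : ((psiV (PolyMap.pow F k 2) + (-Polynomial.X) * psiV (PolyMap.pow F k 3))).natDegree
            < q.natDegree := by
          refine lt_of_le_of_lt (Polynomial.natDegree_add_le _ _) ?_
          have h2 : ((-Polynomial.X : Polynomial ℚ) * psiV (PolyMap.pow F k 3)).natDegree
              ≤ 1 + U3 k := by
            refine le_trans Polynomial.natDegree_mul_le ?_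
            have : (-Polynomial.X : Polynomial ℚ).natDegree = 1 := by
              rw [Polynomial.natDegree_neg, Polynomial.natDegree_X]
            omega
          obtain ⟨j, hj⟩ : ∃ j, k = j + 1 := ⟨k - 1, by omega⟩
          have hstr := U3strict j
          rw [← hj] at hstr
          rw [hqD, hbD]
          simp only [max_lt_iff]
          omega
        have := aux_add (psiV (PolyMap.pow F k 2) + (-Polynomial.X) * psiV (PolyMap.pow F k 3)) q hq0 hp
        rw [← e, hqD] at this
        refine ⟨this.1, ?_⟩
        rw [this.2, U2s]

end lower

section main
variable (F : Fin 5 → MvPolynomial (Fin 5) ℚ)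

lemma totalDeg2 (hF : F = fun i => X i + VasyuninH i) (k : ℕ) :
    (PolyMap.pow F k 2).totalDegree = U2 k := by
  cases k with
  | zero =>
      show (X 2 : MvPolynomial (Fin 5) ℚ).totalDegree = U2 0
      rw [totalDegree_X, U20]
  | succ k =>
      refine le_antisymm ((upperBound F hF _).2.1) ?_
      have h := ((lowerAB F hF (k+1) (by omega)).2).2
      calc U2 (k+1) = (psiV (PolyMap.pow F (k+1) 2)).natDegree := h.symm
        _ ≤ (PolyMap.pow F (k+1) 2).totalDegree := psiV_le _

lemma notLocFin (hF : F = fun i => X i + VasyuninH i) : ¬ PolyMap.LocallyFinite F := by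
  classical
  rintro ⟨d, a, ⟨j, hjd, haj⟩, hsum⟩
  set T := (Finset.range (d+1)).filter (fun l => a l ≠ 0) with hT
  have hTne : T.Nonempty := ⟨j, by
    rw [hT, Finset.mem_filter, Finset.mem_range]; exact ⟨by omega, haj⟩⟩
  set m := T.max' hTne with hm
  have hmT : m ∈ T := T.max'_mem hTne
  have ham : a m ≠ 0 := (Finset.mem_filter.mp hmT).2
  have hTsum : ∑ l ∈ T, C (a l) * PolyMap.pow F l 2 = 0 := by
    rw [hT, Finset.sum_filter_of_ne]
    · exact hsum 2
    · intro x _ hx hax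
      exact hx (by rw [hax, C_0, zero_mul])
  have hkey : C (a m) * PolyMap.pow F m 2
      = -∑ l ∈ T.erase m, C (a l) * PolyMap.pow F l 2 := by
    have := Finset.add_sum_erase T (fun l => C (a l) * PolyMap.pow F l 2) hmT
    rw [hTsum] at this
    linear_combination this
  have hdm : (C (a m) * PolyMap.pow F m 2).totalDegree = U2 m := by
    apply le_antisymm
    · refine le_trans (totalDegree_mul _ _) ?_
      rw [totalDegree_C, totalDeg2 F hF]; omega
    · have hrw : PolyMap.pow F m 2 = C (a m)⁻¹ * (C (a m) * PolyMap.pow F m 2) := by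
        rw [← mul_assoc, ← C_mul, inv_mul_cancel₀ ham, C_1, one_mul]
      have h2 : (C (a m)⁻¹ * (C (a m) * PolyMap.pow F m 2)).totalDegree
          ≤ (C (a m) * PolyMap.pow F m 2).totalDegree :=
        le_trans (totalDegree_mul _ _) (by rw [totalDegree_C, zero_add])
      rw [← hrw] at h2
      rw [← totalDeg2 F hF m]
      exact h2
  have hrhs : (∑ l ∈ T.erase m, C (a l) * PolyMap.pow F l 2).totalDegree < U2 m := by
    have h0 : 0 < U2 m := by have := U2ge m; omega
    refine lt_of_le_of_lt (totalDegree_finset_sum _ _) ?_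
    rw [Finset.sup_lt_iff (by simpa using h0)]
    intro l hl
    have hlm : l < m :=
      lt_of_le_of_ne (T.le_max' l (Finset.mem_of_mem_erase hl)) (Finset.ne_of_mem_erase hl)
    calc (C (a l) * PolyMap.pow F l 2).totalDegree
        ≤ (C (a l)).totalDegree + (PolyMap.pow F l 2).totalDegree := totalDegree_mul _ _
      _ = U2 l := by rw [totalDegree_C, zero_add, totalDeg2 F hF]
      _ < U2 m := U2mono hlm
  rw [hkey, totalDegree_neg] at hdm
  omega

lemma pascal_to_locfin {K : Type*} [CommRing K] [Nontrivial K] {n : ℕ}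
    (G : Fin n → MvPolynomial (Fin n) K) :
    IsPascalFinite G → PolyMap.LocallyFinite G := by
  rintro ⟨m, hm, hiter⟩
  have key : ∀ m : ℕ, ∃ c : ℕ → K, c m = 1 ∧ (∀ l, m < l → c l = 0) ∧
      ∀ i, (Δ G)^[m] (PolyMap.id K n) i
        = ∑ l ∈ Finset.range (m+1), C (c l) * PolyMap.pow G l i := by
    clear hiter hm m
    intro m
    induction m with
    | zero =>
        refine ⟨fun l => if l = 0 then 1 else 0, rfl,
          fun l hl => if_neg (by omega), fun i => ?_⟩
        simp [PolyMap.id, PolyMap.pow]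
    | succ m ih =>
        obtain ⟨c, hcm, hctop, hc⟩ := ih
        refine ⟨fun l => (if l = 0 then 0 else c (l-1)) - c l,
          by simp [hcm, hctop (m+1) (by omega)],
          fun l hl => by
            simp only []
            rw [if_neg (by omega), hctop (l-1) (by omega), hctop l (by omega), sub_zero],
          fun i => ?_⟩
        have hstep : (Δ G)^[m+1] (PolyMap.id K n) i
            = bind₁ G ((Δ G)^[m] (PolyMap.id K n) i) - (Δ G)^[m] (PolyMap.id K n) i := by
          rw [Function.iterate_succ_apply']
          rfl
        have hterm : ∀ l, bind₁ G (C (c l) * PolyMap.pow G l i)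
            = C (c l) * PolyMap.pow G (l+1) i := by
          intro l
          rw [map_mul, bind₁_C_right]
          rfl
        have A : ∑ l ∈ Finset.range (m+2), C (if l = 0 then (0:K) else c (l-1)) * PolyMap.pow G l i
            = ∑ l ∈ Finset.range (m+1), C (c l) * PolyMap.pow G (l+1) i := by
          rw [Finset.sum_range_succ'
            (fun l => C (if l = 0 then (0:K) else c (l-1)) * PolyMap.pow G l i) (m+1)]
          simp
        have B : ∑ l ∈ Finset.range (m+2), C (c l) * PolyMap.pow G l i
            = ∑ l ∈ Finset.range (m+1), C (c l) * PolyMap.pow G l i := by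
          rw [Finset.sum_range_succ, hctop (m+1) (by omega), C_0, zero_mul, add_zero]
        have Csum : ∑ l ∈ Finset.range (m+2),
              C ((if l = 0 then (0:K) else c (l-1)) - c l) * PolyMap.pow G l i
            = (∑ l ∈ Finset.range (m+1), C (c l) * PolyMap.pow G (l+1) i)
              - ∑ l ∈ Finset.range (m+1), C (c l) * PolyMap.pow G l i := by
          rw [← A, ← B, ← Finset.sum_sub_distrib]
          refine Finset.sum_congr rfl fun l _ => ?_
          rw [map_sub, sub_mul]
        rw [hstep, hc i, map_sum]
        simp only [hterm]
        exact Csum.symm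
  obtain ⟨c, hcm, _, hc⟩ := key m
  refine ⟨m, c, ⟨m, le_refl m, by rw [hcm]; exact one_ne_zero⟩, fun i => ?_⟩
  rw [← hc i, hiter]
  rfl

end main

/-- the Vasyunin automorphism has compositional iterates of
unbounded degree; in particular it is neither locally finite nor Pascal finite. -/
theorem vasyunin_unbounded_degrees
    (F : Fin 5 → MvPolynomial (Fin 5) ℚ)
    (hF : F = fun i => X i + VasyuninH i) :
    (∀ N : ℕ, ∃ k : ℕ, N ≤ (PolyMap.pow F k 2).totalDegree) ∧
    (∃ k₀ : ℕ, ∀ k : ℕ, k₀ ≤ k →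
      2 + 2 * (PolyMap.pow F (k - 3) 2).totalDegree ≤ (PolyMap.pow F k 2).totalDegree) ∧
    ¬ PolyMap.LocallyFinite F ∧
    ¬ IsPascalFinite F := by

  refine ⟨?_, ?_, notLocFin F hF, fun h => notLocFin F hF (pascal_to_locfin F h)⟩
  · intro N
    refine ⟨N, ?_⟩
    rw [totalDeg2 F hF]
    have := U2ge N
    omega
  · refine ⟨3, fun k hk => ?_⟩
    obtain ⟨m, rfl⟩ : ∃ m, k = m + 3 := ⟨k - 3, by omega⟩
    rw [show m + 3 - 3 = m by omega, totalDeg2 F hF, totalDeg2 F hF]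
    have h1 : U2 (m + 3) = 2 + 2 * U2 (m + 1) := U2rec (m + 1)
    have h2 : U2 m ≤ U2 (m + 1) := le_of_lt (U2mono (by omega))
    omega
end
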